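/- In the 𝔪-primary case, for every 𝐧 = (n_1,…,n_r) ∈ ℕ^r and every m ∈ ℕ, π_1([Γ_𝐧]_m) = π_1([Γ_{n_1𝐞_1}]_m) + ⋯ + π_1([Γ_{n_r𝐞_r}]_m), a Minkowski sum of finite subsets of ℕ^d; that is, Γ_𝐧 is the levelwise sum Γ_{n_1𝐞_1} ⊕_t ⋯ ⊕_t Γ_{n_r𝐞_r}. -/

import Mathlib

open Filter MvPolynomial Pointwise MeasureTheory

noncomputable section

/-- The graded irrelevant (maximal graded) ideal `𝔪 = (x_1, …, x_d)` of `𝕜[x_1, …, x_d]`. -/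
def mId (𝕜 : Type*) [Field 𝕜] (d : ℕ) : Ideal (MvPolynomial (Fin d) 𝕜) :=
  Ideal.span (Set.range MvPolynomial.X)

/-- A graded family of ideals: `I 0 = R` and `I i * I j ⊆ I (i + j)`. -/
def IsGradedFamily {R : Type*} [CommSemiring R] (I : ℕ → Ideal R) : Prop :=
  I 0 = ⊤ ∧ ∀ i j : ℕ, I i * I j ≤ I (i + j)

/-- An `𝔪`-primary ideal of the polynomial ring: a proper ideal containing a power of `𝔪`. -/
def IsMPrimary {𝕜 : Type*} [Field 𝕜] {d : ℕ} (I : Ideal (MvPolynomial (Fin d) 𝕜)) : Prop :=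
  I ≠ ⊤ ∧ ∃ k : ℕ, mId 𝕜 d ^ k ≤ I

/-- A monomial ideal: an ideal generated by monomials. -/
def IsMonomialIdeal {𝕜 : Type*} [Field 𝕜] {d : ℕ} (I : Ideal (MvPolynomial (Fin d) 𝕜)) : Prop :=
  ∃ S : Set (Fin d →₀ ℕ), I = Ideal.span ((fun m => MvPolynomial.monomial m (1 : 𝕜)) '' S)

/-- A nonzero monomial ideal generated by monomials of degree at most `b`;
for nonzero monomial ideals this is exactly the condition `β(I) ≤ b`. -/
def IsMonomialBounded {𝕜 : Type*} [Field 𝕜] {d : ℕ} (I : Ideal (MvPolynomial (Fin d) 𝕜))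
    (b : ℕ) : Prop :=
  I ≠ ⊥ ∧ ∃ S : Set (Fin d →₀ ℕ), (∀ m ∈ S, (∑ j, m j) ≤ b) ∧
    I = Ideal.span ((fun m => MvPolynomial.monomial m (1 : 𝕜)) '' S)

/-- The `𝕜`-vector space dimension of the quotient `A / (A ⊓ B)`; for `B ⊆ A`
this is `dim_𝕜 (A / B)`. -/
def quotDim (𝕜 : Type*) [Field 𝕜] {R : Type*} [CommRing R] [Algebra 𝕜 R]
    (A B : Ideal R) : ℕ :=
  Module.finrank 𝕜
    (↥(Submodule.restrictScalars 𝕜 A) ⧸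
      Submodule.comap (Submodule.restrictScalars 𝕜 A).subtype (Submodule.restrictScalars 𝕜 B))

/-- The semigroup `Γ_{n₀,𝐧} = {(𝐦,m) ∈ ℕ^d × ℕ : x^𝐦 ∈ 𝐉_{m𝐧}, |𝐦| ≤ c m (n₀+|𝐧|)}`. -/
def GammaSet (𝕜 : Type*) [Field 𝕜] {d r : ℕ}
    (J : Fin r → ℕ → Ideal (MvPolynomial (Fin d) 𝕜)) (c n0 : ℕ) (n : Fin r → ℕ) :
    Set ((Fin d →₀ ℕ) × ℕ) :=
  {q | MvPolynomial.monomial q.1 (1 : 𝕜) ∈ ∏ i, J i (q.2 * n i) ∧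
    (∑ j, q.1 j) ≤ c * q.2 * (n0 + ∑ i, n i)}

/-- The semigroup `Γ̂_{n₀,𝐧} = {(𝐦,m) : x^𝐦 ∈ I_{m n₀}𝐉_{m𝐧}, |𝐦| ≤ c m (n₀+|𝐧|)}`. -/
def GammaHatSet (𝕜 : Type*) [Field 𝕜] {d r : ℕ}
    (I : ℕ → Ideal (MvPolynomial (Fin d) 𝕜))
    (J : Fin r → ℕ → Ideal (MvPolynomial (Fin d) 𝕜)) (c n0 : ℕ) (n : Fin r → ℕ) :
    Set ((Fin d →₀ ℕ) × ℕ) :=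
  {q | MvPolynomial.monomial q.1 (1 : 𝕜) ∈ I (q.2 * n0) * ∏ i, J i (q.2 * n i) ∧
    (∑ j, q.1 j) ≤ c * q.2 * (n0 + ∑ i, n i)}

/-- The level set `π₁([S]_m)` of a subset `S ⊆ ℕ^d × ℕ`. -/
def levelSet {d : ℕ} (S : Set ((Fin d →₀ ℕ) × ℕ)) (m : ℕ) : Set (Fin d →₀ ℕ) :=
  {q | (q, m) ∈ S}

/-- The embedding `ℕ^d × ℕ → ℝ^d × ℝ`. -/
def embedReal {d : ℕ} (q : (Fin d →₀ ℕ) × ℕ) : (Fin d → ℝ) × ℝ :=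
  ((fun j => (q.1 j : ℝ)), (q.2 : ℝ))

/-- `Con(S)`: the closure of the set of all non-negative real linear combinations of
elements of `S ⊆ ℝ^d × ℝ`. -/
def coneOf {d : ℕ} (S : Set ((Fin d → ℝ) × ℝ)) : Set ((Fin d → ℝ) × ℝ) :=
  closure {x | ∃ (k : ℕ) (a : Fin k → ℝ) (v : Fin k → (Fin d → ℝ) × ℝ),
    (∀ j, 0 ≤ a j) ∧ (∀ j, v j ∈ S) ∧ x = ∑ j, a j • v j}

/-- The Newton–Okounkov body `Δ(S) = Con(S) ∩ π^{-1}(1)` of `S ⊆ ℕ^d × ℕ`,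
where `π` is the projection to the last coordinate. -/
def newtonBody {d : ℕ} (S : Set ((Fin d →₀ ℕ) × ℕ)) : Set ((Fin d → ℝ) × ℝ) :=
  {x | x ∈ coneOf (embedReal '' S) ∧ x.2 = 1}

/-- `Vol_d(Δ(S))`: the `d`-dimensional Lebesgue volume of `π₁(Δ(S))`. -/
def volDelta {d : ℕ} (S : Set ((Fin d →₀ ℕ) × ℕ)) : ℝ :=
  (MeasureTheory.volume (Prod.fst '' newtonBody S)).toReal

/-! A monomial `x^q` lies in `∏ᵢ J(i)_{m nᵢ}` iff `q ≥ ∑ᵢ gᵢ` with `x^{gᵢ} ∈ J(i)_{m nᵢ}`.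
Since `𝔪^{(c-1) m nᵢ} ⊆ J(i)_{m nᵢ}`, each `gᵢ` can be shrunk to degree at most `(c-1) m nᵢ`
without leaving the ideal. Because `|q| ≤ c m |𝐧|`, the surplus `q - ∑ᵢ gᵢ` can then be handed
out to the factors so that the `i`-th part has degree at most `c m nᵢ`; enlarging an exponent
keeps a monomial in an ideal. The reverse inclusion is multiplicativity of monomials and
additivity of degrees. -/

namespace Finsupp
variable {σ : Type*}

theorem degree_tsub_add_degree {a b : σ →₀ ℕ} (hab : a ≤ b) :
    degree (b - a) + degree a = degree b := by
  rw [← map_add, tsub_add_cancel_of_le hab]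

theorem exists_between_degree_eq {a b : σ →₀ ℕ} (hab : a ≤ b) {n : ℕ}
    (ha : degree a ≤ n) (hb : n ≤ degree b) : ∃ c, a ≤ c ∧ c ≤ b ∧ degree c = n := by
  obtain ⟨e, he, hdeg⟩ := exists_le_degree_eq (b - a) (n - degree a)
    (by have := degree_tsub_add_degree hab; omega)
  refine ⟨a + e, le_self_add, ?_, by rw [map_add]; omega⟩
  calc a + e ≤ a + (b - a) := add_le_add le_rfl he
    _ = b := add_tsub_cancel_of_le hab

theorem exists_sum_eq_of_le_of_degree_le {ι : Type*} [DecidableEq ι] (t : Finset ι)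
    (m : ι → σ →₀ ℕ) (cap : ι → ℕ) (hm : ∀ i ∈ t, degree (m i) ≤ cap i) (q : σ →₀ ℕ)
    (hmq : ∑ i ∈ t, m i ≤ q) (hq : degree q ≤ ∑ i ∈ t, cap i) :
    ∃ p : ι → σ →₀ ℕ, (∀ i ∈ t, m i ≤ p i ∧ degree (p i) ≤ cap i) ∧ ∑ i ∈ t, p i = q := by
  induction t using Finset.induction generalizing q with
  | empty =>
    exact ⟨m, by simp, ((degree_eq_zero_iff q).mp (by simpa using hq)).symm⟩
  | @insert a t ha ih =>
    rw [Finset.sum_insert ha] at hmq hq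
    have hm' : ∀ i ∈ t, degree (m i) ≤ cap i := fun i hi => hm i (Finset.mem_insert_of_mem hi)
    set M := ∑ i ∈ t, m i
    have hM : degree M ≤ ∑ i ∈ t, cap i := by
      rw [map_sum]; exact Finset.sum_le_sum hm'
    have hma : m a ≤ q - M := le_tsub_of_add_le_right hmq
    have hMq : M ≤ q := le_of_add_le_right hmq
    have hqM := degree_tsub_add_degree hMq
    have hmqM := degree_mono hma
    -- `p a` must take enough degree off `q` for the remaining caps to suffice
    obtain ⟨pa, hpa, hpaq, hdeg⟩ := exists_between_degree_eq hma
      (le_max_left (degree (m a)) (degree q - ∑ i ∈ t, cap i)) (by omega)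
    have hMpa : M ≤ q - pa := le_tsub_of_add_le_left ((le_tsub_iff_right hMq).mp hpaq)
    obtain ⟨p, hp, hpq⟩ := ih hm' (q - pa) hMpa
      (by have := degree_tsub_add_degree (hpaq.trans tsub_le_self); omega)
    refine ⟨Function.update p a pa, fun i hi => ?_, ?_⟩
    · rcases Finset.mem_insert.mp hi with rfl | hi
      · simp only [Function.update_self]; exact ⟨hpa, by have := hm i hi; omega⟩
      · rw [Function.update_of_ne (ne_of_mem_of_not_mem hi ha)]; exact hp i hi
    · rw [Finset.sum_insert ha, Function.update_self, Finset.sum_update_of_notMem ha, hpq,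
        add_tsub_cancel_of_le (hpaq.trans tsub_le_self)]

end Finsupp

namespace MvPolynomial

variable {σ R : Type*} [CommSemiring R]

theorem monomial_one_mem_of_le {I : Ideal (MvPolynomial σ R)} {u v : σ →₀ ℕ} (huv : u ≤ v)
    (hu : monomial u (1 : R) ∈ I) : monomial v (1 : R) ∈ I := by
  rw [← add_tsub_cancel_of_le huv, ← one_mul (1 : R), ← monomial_mul]
  exact I.mul_mem_right _ hu

theorem prod_span_monomial_one_image {ι : Type*} [DecidableEq ι] (t : Finset ι)
    (S : ι → Set (σ →₀ ℕ)) :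
    ∏ i ∈ t, Ideal.span ((fun s => monomial s (1 : R)) '' S i) =
      Ideal.span ((fun s => monomial s (1 : R)) '' ∑ i ∈ t, S i) := by
  induction t using Finset.induction with
  | empty => simp [Ideal.one_eq_top]
  | insert a t ha ih =>
    rw [Finset.prod_insert ha, Finset.sum_insert ha, ih, Ideal.span_mul_span', ← Set.image2_mul,
      Set.image2_image_left, Set.image2_image_right, ← Set.image2_add, Set.image_image2]
    simp only [monomial_mul, one_mul]

theorem exists_le_of_monomial_one_mem_prod_span [Nontrivial R] {ι : Type*} (t : Finset ι)
    (S : ι → Set (σ →₀ ℕ)) {q : σ →₀ ℕ}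
    (hq : monomial q (1 : R) ∈ ∏ i ∈ t, Ideal.span ((fun s => monomial s (1 : R)) '' S i)) :
    ∃ g : ι → σ →₀ ℕ, (∀ i ∈ t, g i ∈ S i) ∧ ∑ i ∈ t, g i ≤ q := by
  classical
  rw [prod_span_monomial_one_image, mem_ideal_span_monomial_image] at hq
  obtain ⟨u, hu, huq⟩ := hq q (by simp)
  obtain ⟨g, hg, rfl⟩ := (Set.mem_finsetSum t S u).mp hu
  exact ⟨g, fun i hi => hg hi, huq⟩

end MvPolynomial

open Finsupp in
theorem exists_sum_eq_of_monomial_one_mem_prod {𝕜 : Type*} [Field 𝕜] {d : ℕ} {ι : Type*}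
    [Fintype ι] {I : ι → Ideal (MvPolynomial (Fin d) 𝕜)} (hI : ∀ i, IsMonomialIdeal (I i))
    {b cap : ι → ℕ} (hb : ∀ i, mId 𝕜 d ^ b i ≤ I i) (hbcap : ∀ i, b i ≤ cap i)
    {q : Fin d →₀ ℕ} (hq : monomial q (1 : 𝕜) ∈ ∏ i, I i) (hdeg : degree q ≤ ∑ i, cap i) :
    ∃ p : ι → Fin d →₀ ℕ,
      (∀ i, monomial (p i) (1 : 𝕜) ∈ I i ∧ degree (p i) ≤ cap i) ∧ ∑ i, p i = q := by
  classical
  choose S hS using hI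
  simp only [hS] at hq hb
  obtain ⟨g, hg, hgq⟩ := exists_le_of_monomial_one_mem_prod_span _ S hq
  have hgI : ∀ i, monomial (g i) (1 : 𝕜) ∈ I i :=
    fun i => hS i ▸ Ideal.subset_span ⟨g i, hg i (Finset.mem_univ i), rfl⟩
  have hsmall : ∀ i, ∃ m ≤ g i, degree m ≤ b i ∧ monomial m (1 : 𝕜) ∈ I i := by
    intro i
    by_cases hgi : degree (g i) ≤ b i
    · exact ⟨g i, le_rfl, hgi, hgI i⟩
    · obtain ⟨m, hm, hmdeg⟩ := exists_le_degree_eq (g i) (b i) (by omega)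
      refine ⟨m, hm, hmdeg.le, hS i ▸ hb i ?_⟩
      exact (monomial_mem_pow_idealOfVars_iff _ _ one_ne_zero).mpr hmdeg.ge
  choose m hmg hmdeg hmI using hsmall
  obtain ⟨p, hp, hpq⟩ := exists_sum_eq_of_le_of_degree_le Finset.univ m cap
    (fun i _ => (hmdeg i).trans (hbcap i)) q
    ((Finset.sum_le_sum fun i _ => hmg i).trans hgq) hdeg
  exact ⟨p, fun i => ⟨monomial_one_mem_of_le (hp i (Finset.mem_univ i)).1 (hmI i),
    (hp i (Finset.mem_univ i)).2⟩, hpq⟩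

theorem IsGradedFamily.pow_one_le {R : Type*} [CommSemiring R] {I : ℕ → Ideal R}
    (hI : IsGradedFamily I) (k : ℕ) : I 1 ^ k ≤ I k := by
  induction k with
  | zero => rw [pow_zero, Ideal.one_eq_top, hI.1]
  | succ k ih => exact (Ideal.mul_mono_left ih).trans (hI.2 k 1)

theorem mem_levelSet_gammaSet {𝕜 : Type*} [Field 𝕜] {d r : ℕ}
    {J : Fin r → ℕ → Ideal (MvPolynomial (Fin d) 𝕜)} {c : ℕ} {n : Fin r → ℕ} {m : ℕ}
    {q : Fin d →₀ ℕ} :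
    q ∈ levelSet (GammaSet 𝕜 J c 0 n) m ↔
      monomial q (1 : 𝕜) ∈ ∏ i, J i (m * n i) ∧ q.degree ≤ ∑ i, c * (m * n i) := by
  simp only [levelSet, GammaSet, Set.mem_ofPred_eq, Finsupp.degree_eq_sum, zero_add,
    Finset.mul_sum, mul_assoc]

theorem mem_levelSet_gammaSet_single {𝕜 : Type*} [Field 𝕜] {d r : ℕ}
    {J : Fin r → ℕ → Ideal (MvPolynomial (Fin d) 𝕜)} (hJ : ∀ i, IsGradedFamily (J i)) {c : ℕ}
    (i : Fin r) (a m : ℕ) {q : Fin d →₀ ℕ} :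
    q ∈ levelSet (GammaSet 𝕜 J c 0 (Pi.single i a)) m ↔
      monomial q (1 : 𝕜) ∈ J i (m * a) ∧ q.degree ≤ c * (m * a) := by
  rw [mem_levelSet_gammaSet, Finset.prod_eq_single i, Finset.sum_eq_single i] <;>
    simp_all [(hJ _).1, Ideal.one_eq_top]

theorem statement8_general {𝕜 : Type*} [Field 𝕜] (d r : ℕ)
    (J : Fin r → ℕ → Ideal (MvPolynomial (Fin d) 𝕜)) (c : ℕ)
    (hJ : ∀ i, IsGradedFamily (J i))
    (hJmon : ∀ i n, IsMonomialIdeal (J i n))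
    (hcont : ∀ i, mId 𝕜 d ^ (c - 1) ≤ J i 1) :
    ∀ (n : Fin r → ℕ) (m : ℕ),
      levelSet (GammaSet 𝕜 J c 0 n) m =
        ∑ i : Fin r, levelSet (GammaSet 𝕜 J c 0 (Pi.single i (n i))) m := by
  intro n m
  have hpow : ∀ i k, mId 𝕜 d ^ ((c - 1) * k) ≤ J i k := fun i k => by
    rw [pow_mul]; exact (Ideal.pow_right_mono (hcont i) k).trans ((hJ i).pow_one_le k)
  ext q
  simp only [Set.mem_fintype_sum, exists_prop, mem_levelSet_gammaSet_single hJ,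
    mem_levelSet_gammaSet]
  constructor
  · rintro ⟨hq, hdeg⟩
    exact exists_sum_eq_of_monomial_one_mem_prod (fun i => hJmon i _) (fun i => hpow i _)
      (fun i => Nat.mul_le_mul_right _ (Nat.sub_le c 1)) hq hdeg
  · rintro ⟨p, hp, rfl⟩
    constructor
    · rw [monomial_sum_one]
      exact Ideal.prod_mem_prod fun i _ => (hp i).1
    · rw [map_sum]
      exact Finset.sum_le_sum fun i _ => (hp i).2

/-- **Levelwise decomposition in the `𝔪`-primary case:**
`Γ_𝐧 = Γ_{n₁𝐞₁} ⊕_t ⋯ ⊕_t Γ_{n_r𝐞_r}`, i.e. for every level `m`,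
`π₁([Γ_𝐧]_m) = π₁([Γ_{n₁𝐞₁}]_m) + ⋯ + π₁([Γ_{n_r𝐞_r}]_m)` (Minkowski sums).
Here `Γ_𝐧 = {(𝐦,m) : x^𝐦 ∈ 𝐉_{m𝐧}, |𝐦| ≤ c m |𝐧|}` is `GammaSet 𝕜 J c 0 𝐧`. -/
theorem statement8 {𝕜 : Type*} [Field 𝕜] (d r : ℕ) (hd : 0 < d)
    (J : Fin r → ℕ → Ideal (MvPolynomial (Fin d) 𝕜)) (c : ℕ)
    (hJ : ∀ i, IsGradedFamily (J i))
    (hJmon : ∀ i n, IsMonomialIdeal (J i n))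
    (hJprim : ∀ i n, 0 < n → IsMPrimary (J i n))
    (hc2 : 2 ≤ c)
    (hcont : ∀ i, mId 𝕜 d ^ (c - 1) ≤ J i 1) :
    ∀ (n : Fin r → ℕ) (m : ℕ),
      levelSet (GammaSet 𝕜 J c 0 n) m =
        ∑ i : Fin r, levelSet (GammaSet 𝕜 J c 0 (Pi.single i (n i))) m :=
  statement8_general d r J c hJ hJmon hcont
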